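/- arXiv:2303.10088 — 5 statements merged into one kernel-verified Lean document; each statement's English description precedes it below -/
import Mathlib

section
/- The relation ⪯ on Σ* is a partial order (reflexive, antisymmetric and transitive), and ≤lex is a linear extension of it, i.e. (Σ*, ≤lex) is a linear order and w ⪯ w' implies w ≤lex w' for all w, w' ∈ Σ*. -/
/-- The three-letter alphabet `Σ = {L, X, R}`. -/
inductive Sig : Type
  | L
  | X
  | R
  deriving DecidableEq

namespace Sig

def val : Sig → ℕ
  | L => 0
  | X => 1
  | R => 2

/-- The order `L <lex X <lex R` on letters. -/
def le (a b : Sig) : Prop := a.val ≤ b.val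

def lt (a b : Sig) : Prop := a.val < b.val

end Sig

/-- Finite words over the alphabet `Σ = {L, X, R}`. -/
abbrev Word : Type := List Sig

/-- The `i`-th letter of `w` (with a junk value out of range). -/
def idx (w : Word) (i : ℕ) : Sig := w.getD i Sig.L

/-- Strict lexicographic order on words: comparison at the first differing position, a
proper initial segment preceding its extensions. -/
def lexLt (u v : Word) : Prop :=
  (∃ i, i < u.length ∧ i < v.length ∧ Sig.lt (idx u i) (idx v i) ∧
    ∀ j < i, idx u j = idx v j) ∨
  (u.length < v.length ∧ ∀ j < u.length, idx u j = idx v j)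

def lexLe (u v : Word) : Prop := lexLt u v ∨ u = v

/-- The relation `≺`: there is `i < min(|u|,|v|)` with `(u_i, v_i) = (L, R)` and
`u_j ≤lex v_j` for all `j < i`. -/
def prec (u v : Word) : Prop :=
  ∃ i, i < u.length ∧ i < v.length ∧ idx u i = Sig.L ∧ idx v i = Sig.R ∧
    ∀ j < i, Sig.le (idx u j) (idx v j)

/-- The relation `⪯`. -/
def preceq (u v : Word) : Prop := prec u v ∨ u = v

/-- The relation `⊴`: element-wise comparison of words of the same length. -/
def trleq (u v : Word) : Prop :=
  u.length = v.length ∧ ∀ i < u.length, Sig.le (idx u i) (idx v i)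

/-- The relation `⊥`: `⊴`-incomparability. -/
def perp (u v : Word) : Prop := ¬ trleq u v ∧ ¬ trleq v u

/-- `u` and `v` are related if `u ⪯ v`, `v ⪯ u` or `u ⊥ v`. -/
def related (u v : Word) : Prop := preceq u v ∨ preceq v u ∨ perp u v

/-- The compatibility conditions for a pair `u ≤lex v`. -/
def compatPair (u v : Word) : Prop :=
  (∀ l < min u.length v.length, ¬ (idx u l = Sig.R ∧ idx v l = Sig.L)) ∧
  ((∃ l < min u.length v.length, idx u l = Sig.L ∧ idx v l = Sig.R) →
    ∀ l < min u.length v.length, Sig.le (idx u l) (idx v l))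

/-- `u` and `v` are compatible: the `≤lex`-smaller of the two satisfies the compatibility
conditions with the `≤lex`-larger. -/
def compatible (u v : Word) : Prop :=
  (lexLe u v ∧ compatPair u v) ∨ (lexLe v u ∧ compatPair v u)

/-- `S̄`: the segClosure of `S` under initial segments. -/
def segClosure (S : Set Word) : Set Word := {u | ∃ w ∈ S, u <+: w}

/-- Level `l` of a set of words. -/
def level (S : Set Word) (l : ℕ) : Set Word := {w | w ∈ S ∧ w.length = l}

/-- `S̄_l` : level `l` of the segClosure of `S`. -/
def cLevel (S : Set Word) (l : ℕ) : Set Word := level (segClosure S) l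

/-- Isomorphism of level structures `(A; ⪯, ⊴, ≤lex)`: a bijection preserving and
reflecting `⪯`, `⊴` and `≤lex`. -/
def LevelIso (A B : Set Word) : Prop :=
  ∃ e : Word → Word, Set.BijOn e A B ∧
    ∀ u ∈ A, ∀ v ∈ A,
      (preceq u v ↔ preceq (e u) (e v)) ∧
      (trleq u v ↔ trleq (e u) (e v)) ∧
      (lexLe u v ↔ lexLe (e u) (e v))

/-- A level `i` of `S` is interesting. -/
def Interesting (S : Set Word) (i : ℕ) : Prop :=
  ¬ LevelIso (cLevel S i) (cLevel S (i + 1)) ∨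
  (∃ u ∈ cLevel S (i + 1), ∃ v ∈ cLevel S (i + 1),
    ¬ compatible u v ∧ compatible (u.take i) (v.take i)) ∨
  (∃ u ∈ S, u.length = i)

/-- `τ_S(w)`: delete the characters of `w` whose indices are not interesting levels of `S`. -/
noncomputable def tauW (S : Set Word) (w : Word) : Word :=
  ((List.range w.length).filter
    (fun i => @decide (Interesting S i) (Classical.propDecidable _))).map (fun i => idx w i)

/-- A function is shape-preserving if it commutes with taking embedding types. -/
def ShapePreserving (S : Set Word) (f : Word → Word) : Prop :=
  ∀ w ∈ S, tauW S w = tauW (f '' S) (f w)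

/-- `A⌢c`. -/
def appendSet (A : Set Word) (c : Sig) : Set Word := (fun w => w ++ [c]) '' A

def LeafLevelAt (S : Set Word) (l : ℕ) (w : Word) : Prop :=
  w ∈ cLevel S l ∧ (∀ u ∈ cLevel S l, u ≠ w → related w u) ∧
  cLevel S (l + 1) = appendSet (cLevel S l \ {w}) Sig.X

def LeafLevel (S : Set Word) (l : ℕ) : Prop := ∃ w, LeafLevelAt S l w

def SplitLevelAt (S : Set Word) (l : ℕ) (w : Word) : Prop :=
  w ∈ cLevel S l ∧
  cLevel S (l + 1) =
    appendSet {z ∈ cLevel S l | lexLt z w} Sig.X ∪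
    {w ++ [Sig.X], w ++ [Sig.R]} ∪
    appendSet {z ∈ cLevel S l | lexLt w z} Sig.R

def SplitLevel (S : Set Word) (l : ℕ) : Prop := ∃ w, SplitLevelAt S l w

def NewPerpLevelAt (S : Set Word) (l : ℕ) (v w : Word) : Prop :=
  v ∈ cLevel S l ∧ w ∈ cLevel S l ∧ lexLt v w ∧ ¬ related v w ∧
  (∀ u ∈ cLevel S l, lexLt v u → lexLt u w → perp u v ∨ perp u w) ∧
  cLevel S (l + 1) =
    appendSet {z ∈ cLevel S l | lexLt z v} Sig.X ∪
    {v ++ [Sig.R]} ∪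
    appendSet {z ∈ cLevel S l | lexLt v z ∧ lexLt z w ∧ perp z v} Sig.X ∪
    appendSet {z ∈ cLevel S l | lexLt v z ∧ lexLt z w ∧ ¬ perp z v} Sig.R ∪
    {w ++ [Sig.X]} ∪
    appendSet {z ∈ cLevel S l | lexLt w z} Sig.R

def NewPerpLevel (S : Set Word) (l : ℕ) : Prop := ∃ v w, NewPerpLevelAt S l v w

def NewPrecLevelAt (S : Set Word) (l : ℕ) (v w : Word) : Prop :=
  v ∈ cLevel S l ∧ w ∈ cLevel S l ∧ lexLt v w ∧ ¬ related v w ∧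
  (∀ u ∈ cLevel S l, lexLt u v → preceq u w ∨ perp u v) ∧
  (∀ u ∈ cLevel S l, lexLt w u → preceq v u ∨ perp w u) ∧
  cLevel S (l + 1) =
    appendSet {z ∈ cLevel S l | lexLt z v ∧ perp z v} Sig.X ∪
    appendSet {z ∈ cLevel S l | lexLt z v ∧ ¬ perp z v} Sig.L ∪
    {v ++ [Sig.L]} ∪
    appendSet {z ∈ cLevel S l | lexLt v z ∧ lexLt z w} Sig.X ∪
    {w ++ [Sig.R]} ∪
    appendSet {z ∈ cLevel S l | lexLt w z ∧ perp w z} Sig.X ∪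
    appendSet {z ∈ cLevel S l | lexLt w z ∧ ¬ perp w z} Sig.R

def NewPrecLevel (S : Set Word) (l : ℕ) : Prop := ∃ v w, NewPrecLevelAt S l v w

def ExactlyOne (a b c d : Prop) : Prop :=
  (a ∧ ¬b ∧ ¬c ∧ ¬d) ∨ (¬a ∧ b ∧ ¬c ∧ ¬d) ∨ (¬a ∧ ¬b ∧ c ∧ ¬d) ∨ (¬a ∧ ¬b ∧ ¬c ∧ d)

/-- A poset-diary: an antichain under the initial segment relation such that on each level
below the supremum of lengths exactly one of the four critical events happens. -/
def PosetDiary (S : Set Word) : Prop :=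
  (∀ u ∈ S, ∀ v ∈ S, u <+: v → u = v) ∧
  ∀ l : ℕ, (∃ w ∈ S, l < w.length) →
    ExactlyOne (LeafLevel S l) (SplitLevel S l) (NewPerpLevel S l) (NewPrecLevel S l)

section Aux

lemma idx_cons_zero (a : Sig) (u : Word) : idx (a :: u) 0 = a := rfl

lemma idx_cons_succ (a : Sig) (u : Word) (j : ℕ) : idx (a :: u) (j + 1) = idx u j := rfl

lemma sig_trichotomy (a b : Sig) : Sig.lt a b ∨ a = b ∨ Sig.lt b a := by
  cases a <;> cases b <;> simp [Sig.lt, Sig.val]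

lemma sig_lt_asymm {a b : Sig} (h : Sig.lt a b) (h' : Sig.lt b a) : False := by
  cases a <;> cases b <;> simp [Sig.lt, Sig.val] at h h'

lemma sig_lt_irrefl {a : Sig} (h : Sig.lt a a) : False := by
  cases a <;> simp [Sig.lt, Sig.val] at h

lemma sig_le_of_lt {a b : Sig} (h : Sig.lt a b) : Sig.le a b := le_of_lt h

lemma sig_lt_of_le_ne {a b : Sig} (h : Sig.le a b) (h' : a ≠ b) : Sig.lt a b := by
  cases a <;> cases b <;> simp_all [Sig.lt, Sig.le, Sig.val]

lemma lexLt_nil_right (u : Word) : ¬ lexLt u [] := by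
  rintro (⟨i, _, hi, _⟩ | ⟨h, _⟩) <;> simp at * <;> omega

lemma lexLt_nil_left {v : Word} (h : v ≠ []) : lexLt [] v := by
  right
  constructor
  · simpa [List.length_pos_iff] using h
  · intro j hj; simp at hj

lemma lexLt_cons {a b : Sig} {u v : Word} :
    lexLt (a :: u) (b :: v) ↔ Sig.lt a b ∨ (a = b ∧ lexLt u v) := by
  constructor
  · rintro (⟨i, hiu, hiv, hlt, hpre⟩ | ⟨hlen, hpre⟩)
    · cases i with
      | zero => exact Or.inl hlt
      | succ j =>
        refine Or.inr ⟨hpre 0 (Nat.succ_pos _), Or.inl ⟨j, ?_, ?_, hlt, ?_⟩⟩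
        · simpa using hiu
        · simpa using hiv
        · intro k hk
          have := hpre (k + 1) (by omega)
          simpa [idx_cons_succ] using this
    · refine Or.inr ⟨hpre 0 (by simp), Or.inr ⟨by simpa using hlen, ?_⟩⟩
      intro j hj
      have := hpre (j + 1) (by simpa using Nat.succ_lt_succ hj)
      simpa [idx_cons_succ] using this
  · rintro (hlt | ⟨rfl, (⟨i, hiu, hiv, hlt, hpre⟩ | ⟨hlen, hpre⟩)⟩)
    · exact Or.inl ⟨0, by simp, by simp, hlt, by omega⟩
    · refine Or.inl ⟨i + 1, by simpa using Nat.succ_lt_succ hiu,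
        by simpa using Nat.succ_lt_succ hiv, hlt, ?_⟩
      intro j hj
      cases j with
      | zero => rfl
      | succ k => exact hpre k (by omega)
    · refine Or.inr ⟨by simpa using Nat.succ_lt_succ hlen, ?_⟩
      intro j hj
      cases j with
      | zero => rfl
      | succ k => exact hpre k (by simpa using hj)

lemma lexLt_asymm : ∀ u v : Word, lexLt u v → lexLt v u → False := by
  intro u
  induction u with
  | nil => intro v _ h; exact lexLt_nil_right v h
  | cons a u ih =>
    intro v h h'
    cases v with
    | nil => exact lexLt_nil_right _ h
    | cons b v =>
      rcases (lexLt_cons).1 h with hab | ⟨rfl, huv⟩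
      · rcases (lexLt_cons).1 h' with hba | ⟨rfl, hvu⟩
        · exact sig_lt_asymm hab hba
        · exact sig_lt_irrefl hab
      · rcases (lexLt_cons).1 h' with hba | ⟨_, hvu⟩
        · exact sig_lt_irrefl hba
        · exact ih v huv hvu

lemma lexLt_trans : ∀ u v w : Word, lexLt u v → lexLt v w → lexLt u w := by
  intro u
  induction u with
  | nil =>
    intro v w _ h2
    cases w with
    | nil => exact absurd h2 (lexLt_nil_right v)
    | cons c w => exact lexLt_nil_left (by simp)
  | cons a u ih =>
    intro v w h1 h2
    cases v with
    | nil => exact absurd h1 (lexLt_nil_right _)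
    | cons b v =>
      cases w with
      | nil => exact absurd h2 (lexLt_nil_right _)
      | cons c w =>
        rcases (lexLt_cons).1 h1 with hab | ⟨rfl, huv⟩ <;>
          rcases (lexLt_cons).1 h2 with hbc | ⟨rfl, hvw⟩
        · refine (lexLt_cons).2 (Or.inl ?_)
          cases a <;> cases b <;> cases c <;> simp_all [Sig.lt, Sig.val]
        · exact (lexLt_cons).2 (Or.inl hab)
        · exact (lexLt_cons).2 (Or.inl hbc)
        · exact (lexLt_cons).2 (Or.inr ⟨rfl, ih v w huv hvw⟩)

lemma lexLt_total : ∀ u v : Word, lexLt u v ∨ u = v ∨ lexLt v u := by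
  intro u
  induction u with
  | nil =>
    intro v
    cases v with
    | nil => exact Or.inr (Or.inl rfl)
    | cons b v => exact Or.inl (lexLt_nil_left (by simp))
  | cons a u ih =>
    intro v
    cases v with
    | nil => exact Or.inr (Or.inr (lexLt_nil_left (by simp)))
    | cons b v =>
      rcases sig_trichotomy a b with hab | rfl | hba
      · exact Or.inl ((lexLt_cons).2 (Or.inl hab))
      · rcases ih v with h | rfl | h
        · exact Or.inl ((lexLt_cons).2 (Or.inr ⟨rfl, h⟩))
        · exact Or.inr (Or.inl rfl)
        · exact Or.inr (Or.inr ((lexLt_cons).2 (Or.inr ⟨rfl, h⟩)))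
      · exact Or.inr (Or.inr ((lexLt_cons).2 (Or.inl hba)))

lemma prec_cons {a b : Sig} {u v : Word} (h : prec (a :: u) (b :: v)) :
    (a = Sig.L ∧ b = Sig.R) ∨ (Sig.le a b ∧ prec u v) := by
  obtain ⟨i, hiu, hiv, hL, hR, hpre⟩ := h
  cases i with
  | zero => exact Or.inl ⟨hL, hR⟩
  | succ j =>
    refine Or.inr ⟨hpre 0 (Nat.succ_pos _), j, by simpa using hiu, by simpa using hiv,
      hL, hR, ?_⟩
    intro k hk
    exact hpre (k + 1) (by omega)

lemma prec_nil_left (v : Word) : ¬ prec [] v := by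
  rintro ⟨i, hi, _⟩; simp at hi

lemma prec_lexLt : ∀ u v : Word, prec u v → lexLt u v := by
  intro u
  induction u with
  | nil => intro v h; exact absurd h (prec_nil_left v)
  | cons a u ih =>
    intro v h
    cases v with
    | nil =>
      obtain ⟨i, _, hiv, _⟩ := h
      simp at hiv
    | cons b v =>
      rcases prec_cons h with ⟨rfl, rfl⟩ | ⟨hab, huv⟩
      · exact (lexLt_cons).2 (Or.inl (by simp [Sig.lt, Sig.val]))
      · by_cases hab' : a = b
        · exact (lexLt_cons).2 (Or.inr ⟨hab', ih v huv⟩)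
        · exact (lexLt_cons).2 (Or.inl (sig_lt_of_le_ne hab hab'))

lemma prec_trans : ∀ u v w : Word, prec u v → prec v w → prec u w := by
  intro u v w ⟨i, hiu, hiv, hLu, hRv, hpre⟩ ⟨i', hiv', hiw, hLv, hRw, hpre'⟩
  rcases le_or_gt i i' with hle | hlt
  · -- at index i : u_i = L; v_i = R; if i < i' then v_i ≤ w_i so w_i = R; if i = i', v_i both L and R
    rcases eq_or_lt_of_le hle with rfl | hlt
    · rw [hLv] at hRv; exact absurd hRv (by simp)
    · refine ⟨i, hiu, by omega, hLu, ?_, ?_⟩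
      · have := hpre' i hlt
        rw [hRv] at this
        cases h : idx w i <;> simp_all [Sig.le, Sig.val]
      · intro j hj
        have h1 := hpre j hj
        have h2 := hpre' j (by omega)
        exact le_trans h1 h2
  · -- i' < i: u_{i'} ≤ v_{i'} = L so u_{i'} = L
    refine ⟨i', by omega, hiw, ?_, hRw, ?_⟩
    · have := hpre i' hlt
      rw [hLv] at this
      cases h : idx u i' <;> simp_all [Sig.le, Sig.val]
    · intro j hj
      exact le_trans (hpre j (by omega)) (hpre' j hj)

end Aux

/-- `⪯` is a partial order on `Σ*` and `≤lex` is a linear extension of it. -/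
theorem preceq_partialOrder_and_lexLe_linear_extension :
    (∀ u : Word, preceq u u) ∧
    (∀ u v : Word, preceq u v → preceq v u → u = v) ∧
    (∀ u v w : Word, preceq u v → preceq v w → preceq u w) ∧
    (∀ u : Word, lexLe u u) ∧
    (∀ u v : Word, lexLe u v → lexLe v u → u = v) ∧
    (∀ u v w : Word, lexLe u v → lexLe v w → lexLe u w) ∧
    (∀ u v : Word, lexLe u v ∨ lexLe v u) ∧
    (∀ u v : Word, preceq u v → lexLe u v) := by
  refine ⟨fun u => Or.inr rfl, ?_, ?_, fun u => Or.inr rfl, ?_, ?_, ?_, ?_⟩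
  · rintro u v (h | rfl) (h' | h'') <;> try rfl
    · exact absurd (prec_lexLt v u h') (fun hh => lexLt_asymm u v (prec_lexLt u v h) hh)
    · exact h''.symm
  · rintro u v w (h | rfl) (h' | rfl)
    · exact Or.inl (prec_trans u v w h h')
    · exact Or.inl h
    · exact Or.inl h'
    · exact Or.inr rfl
  · rintro u v (h | rfl) (h' | h'') <;> try rfl
    · exact absurd h' (fun hh => lexLt_asymm u v h hh)
    · exact h''.symm
  · rintro u v w (h | rfl) (h' | rfl)
    · exact Or.inl (lexLt_trans u v w h h')
    · exact Or.inl h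
    · exact Or.inl h'
    · exact Or.inr rfl
  · intro u v
    rcases lexLt_total u v with h | rfl | h
    · exact Or.inl (Or.inl h)
    · exact Or.inl (Or.inr rfl)
    · exact Or.inr (Or.inl h)
  · rintro u v (h | rfl)
    · exact Or.inl (prec_lexLt u v h)
    · exact Or.inr rfl
end

section
/- Let u <lex v be words in Σ* of the same length i ≥ 0, and let c, c' ∈ Σ satisfy c ≤lex c' and (c, c') ≠ (L, R). Then: (1) u ⪯ v if and only if u⌢c ⪯ v⌢c'; (2) u ⊥ v if and only if u⌢c ⊥ v⌢c'; (3) if u and v are compatible, then u⌢c and v⌢c' are compatible. -/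
lemma idx_append_lt (w : Word) (c : Sig) {j : ℕ} (h : j < w.length) :
    idx (w ++ [c]) j = idx w j := by
  simp [idx, List.getD, List.getElem?_append_left h]

lemma idx_append_self (w : Word) (c : Sig) : idx (w ++ [c]) w.length = c := by
  simp [idx, List.getD]

lemma lexLt_asymm_s3 {u v : Word} (h : u.length = v.length) (h1 : lexLt u v) :
    ¬ lexLt v u := by
  rintro (⟨k, hk1, hk2, hklt, hkeq⟩ | ⟨hl, _⟩)
  · rcases h1 with ⟨m, hm1, hm2, hmlt, hmeq⟩ | ⟨hl, _⟩
    · simp only [Sig.lt] at hklt hmlt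
      rcases lt_trichotomy k m with hkm | hkm | hkm
      · rw [hmeq k hkm] at hklt; omega
      · subst hkm; omega
      · rw [hkeq m hkm] at hmlt; omega
    · omega
  · omega

lemma not_trleq_of_lexLt {u v : Word} (h : u.length = v.length) (h1 : lexLt u v) :
    ¬ trleq v u := by
  rintro ⟨_, hle⟩
  rcases h1 with ⟨m, hm1, hm2, hmlt, _⟩ | ⟨hl, _⟩
  · have := hle m (h ▸ hm1)
    simp only [Sig.lt] at hmlt
    simp only [Sig.le] at this
    omega
  · omega

/-- safe one-letter extensions preserve `⪯`, `⊥` and compatibility. -/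
theorem safe_extension (i : ℕ) (u v : Word) (hu : u.length = i) (hv : v.length = i)
    (hlex : lexLt u v) (c c' : Sig) (hcc : Sig.le c c')
    (hne : ¬ (c = Sig.L ∧ c' = Sig.R)) :
    (preceq u v ↔ preceq (u ++ [c]) (v ++ [c'])) ∧
    (perp u v ↔ perp (u ++ [c]) (v ++ [c'])) ∧
    (compatible u v → compatible (u ++ [c]) (v ++ [c'])) := by
  subst hu
  have hv' := hv
  have lenu : (u ++ [c]).length = u.length + 1 := by simp
  have lenv : (v ++ [c']).length = u.length + 1 := by simp [hv]
  have hne' : u ≠ v := by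
    rintro rfl
    exact lexLt_asymm_s3 rfl hlex hlex
  have hne'' : u ++ [c] ≠ v ++ [c'] := by
    intro h
    have := List.append_inj' h (by simp)
    exact hne' this.1
  constructor
  · -- preceq
    constructor
    · rintro (⟨k, hk1, hk2, hL, hR, hj⟩ | h)
      · left
        refine ⟨k, by omega, by omega, ?_, ?_, ?_⟩
        · rw [idx_append_lt u c hk1]; exact hL
        · rw [idx_append_lt v c' hk2]; exact hR
        · intro j hj'
          rw [idx_append_lt u c (by omega), idx_append_lt v c' (by omega)]
          exact hj j hj'
      · exact absurd h hne'
    · rintro (⟨k, hk1, hk2, hL, hR, hj⟩ | h)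
      · left
        rcases lt_or_eq_of_le (Nat.lt_succ_iff.mp (lenu ▸ hk1)) with hk | hk
        · refine ⟨k, hk, by omega, ?_, ?_, ?_⟩
          · rw [idx_append_lt u c hk] at hL; exact hL
          · rw [idx_append_lt v c' (by omega)] at hR; exact hR
          · intro j hj'
            have := hj j hj'
            rw [idx_append_lt u c (by omega), idx_append_lt v c' (by omega)] at this
            exact this
        · exfalso
          rw [hk, idx_append_self u c] at hL
          rw [hk, ← hv, idx_append_self v c'] at hR
          exact hne ⟨hL, hR⟩
      · exact absurd h hne''
  constructor
  · -- perp
    have hA : ¬ trleq v u := not_trleq_of_lexLt hv.symm hlex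
    have hB : ¬ trleq (v ++ [c']) (u ++ [c]) := by
      rintro ⟨_, hle⟩
      refine hA ⟨hv, fun j hj => ?_⟩
      have := hle j (by omega)
      rwa [idx_append_lt v c' hj, idx_append_lt u c (by omega)] at this
    have key : trleq u v ↔ trleq (u ++ [c]) (v ++ [c']) := by
      constructor
      · rintro ⟨_, hle⟩
        refine ⟨by omega, fun j hj => ?_⟩
        rcases lt_or_eq_of_le (Nat.lt_succ_iff.mp (lenu ▸ hj)) with h | h
        · rw [idx_append_lt u c h, idx_append_lt v c' (by omega)]
          exact hle j h
        · rw [h, idx_append_self u c, ← hv, idx_append_self v c']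
          exact hcc
      · rintro ⟨_, hle⟩
        refine ⟨hv.symm, fun j hj => ?_⟩
        have := hle j (by omega)
        rwa [idx_append_lt u c hj, idx_append_lt v c' (by omega)] at this
    unfold perp
    rw [key]
    constructor
    · rintro ⟨h1, _⟩; exact ⟨h1, hB⟩
    · rintro ⟨h1, _⟩; exact ⟨h1, hA⟩
  · -- compatible
    intro hcomp
    have hlex' : lexLt (u ++ [c]) (v ++ [c']) := by
      rcases hlex with ⟨k, hk1, hk2, hklt, hkeq⟩ | ⟨hl, _⟩
      · left
        refine ⟨k, by omega, by omega, ?_, ?_⟩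
        · rwa [idx_append_lt u c hk1, idx_append_lt v c' hk2]
        · intro j hj
          rw [idx_append_lt u c (by omega), idx_append_lt v c' (by omega)]
          exact hkeq j hj
      · omega
    have hcp : compatPair u v := by
      rcases hcomp with ⟨_, h⟩ | ⟨h1, _⟩
      · exact h
      · exfalso
        rcases h1 with h1 | h1
        · exact lexLt_asymm_s3 hv h1 hlex
        · exact hne' h1.symm
    left
    refine ⟨Or.inl hlex', ?_, ?_⟩
    · intro l hl
      rintro ⟨hR, hL⟩
      rcases lt_or_eq_of_le (Nat.lt_succ_iff.mp (by omega : l < u.length + 1)) with h | h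
      · rw [idx_append_lt u c h] at hR
        rw [idx_append_lt v c' (by omega)] at hL
        exact hcp.1 l (by omega) ⟨hR, hL⟩
      · rw [h, idx_append_self u c] at hR
        rw [h, ← hv, idx_append_self v c'] at hL
        subst hR; subst hL
        simp [Sig.le, Sig.val] at hcc
    · rintro ⟨l, hl, hLu, hRv⟩ m hm
      have hlen : min (u ++ [c]).length (v ++ [c']).length = u.length + 1 := by
        simp [hv]
      rw [hlen] at hl hm
      have hwit : ∃ l' < min u.length v.length, idx u l' = Sig.L ∧ idx v l' = Sig.R := by
        rcases lt_or_eq_of_le (Nat.lt_succ_iff.mp hl) with h | h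
        · refine ⟨l, by omega, ?_, ?_⟩
          · rwa [idx_append_lt u c h] at hLu
          · rwa [idx_append_lt v c' (by omega)] at hRv
        · exfalso
          rw [h, idx_append_self u c] at hLu
          rw [h, ← hv, idx_append_self v c'] at hRv
          exact hne ⟨hLu, hRv⟩
      have hall := hcp.2 ⟨hwit.choose, hwit.choose_spec.1, hwit.choose_spec.2⟩
      rcases lt_or_eq_of_le (Nat.lt_succ_iff.mp hm) with h | h
      · rw [idx_append_lt u c h, idx_append_lt v c' (by omega)]
        exact hall m (by omega)
      · rw [h, idx_append_self u c, ← hv, idx_append_self v c']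
        exact hcc
end

section
/- Let ≤P be a partial order on ℕ and let a, b, m, n ∈ ℕ with a ≥ m and b ≥ n. Then: (1) if a ≤P b, then σ_m(a)_ℓ ≤lex σ_n(b)_ℓ for every ℓ < min(m, n); (2) if σ_m(a) ≺ σ_n(b), then a ≤P b; (3) if there exists ℓ < min(m, n) such that σ_m(a)_j = σ_n(b)_j for all j < ℓ and σ_m(a)_ℓ <lex σ_n(b)_ℓ, then b ≤P a does not hold; (4) if m = n and σ_m(a) ⊥ σ_n(b), then a and b are ≤P-incomparable. -/
/-- `σ_m(a)`: the word of the 1-type of `a` over `0,…,m−1` for a partial order `≤P` on `ℕ`. -/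
noncomputable def sigmaWord (po : PartialOrder ℕ) (m a : ℕ) : Word :=
  (List.range m).map (fun i =>
    @ite Sig (po.lt a i) (Classical.propDecidable _) Sig.L
      (@ite Sig (po.lt i a) (Classical.propDecidable _) Sig.R Sig.X))


lemma sigma_len (po : PartialOrder ℕ) (m a : ℕ) : (sigmaWord po m a).length = m := by
  simp [sigmaWord]

lemma sigma_idx (po : PartialOrder ℕ) (m a i : ℕ) (h : i < m) :
    idx (sigmaWord po m a) i =
      @ite Sig (po.lt a i) (Classical.propDecidable _) Sig.L
        (@ite Sig (po.lt i a) (Classical.propDecidable _) Sig.R Sig.X) := by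
  have hl : i < (sigmaWord po m a).length := by rw [sigma_len]; exact h
  rw [idx, List.getD_eq_getElem _ _ hl]
  simp only [sigmaWord, List.getElem_map]
  rw [List.getElem_range]

/-- relations between words of 1-types reflect the partial order on `ℕ`. -/
theorem sigmaWord_relations (po : PartialOrder ℕ) (a b m n : ℕ)
    (ham : m ≤ a) (hbn : n ≤ b) :
    -- (1)
    (po.le a b → ∀ l < min m n,
      Sig.le (idx (sigmaWord po m a) l) (idx (sigmaWord po n b) l)) ∧
    -- (2)
    (prec (sigmaWord po m a) (sigmaWord po n b) → po.le a b) ∧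
    -- (3)
    ((∃ l < min m n, (∀ j < l, idx (sigmaWord po m a) j = idx (sigmaWord po n b) j) ∧
        Sig.lt (idx (sigmaWord po m a) l) (idx (sigmaWord po n b) l)) → ¬ po.le b a) ∧
    -- (4)
    (m = n → perp (sigmaWord po m a) (sigmaWord po n b) →
      ¬ po.le a b ∧ ¬ po.le b a) := by
  classical
  have ltt : ∀ {x y z : ℕ}, po.lt x y → po.lt y z → po.lt x z :=
    fun h1 h2 => @lt_trans ℕ po.toPreorder _ _ _ h1 h2
  have lel : ∀ {x y z : ℕ}, po.le x y → po.lt y z → po.lt x z :=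
    fun h1 h2 => @lt_of_le_of_lt ℕ po.toPreorder _ _ _ h1 h2
  have lle : ∀ {x y z : ℕ}, po.lt x y → po.le y z → po.lt x z :=
    fun h1 h2 => @lt_of_lt_of_le ℕ po.toPreorder _ _ _ h1 h2
  have irr : ∀ {x : ℕ}, ¬ po.lt x x := fun {x} => @lt_irrefl ℕ po.toPreorder x
  have lof : ∀ {x y : ℕ}, po.lt x y → po.le x y :=
    fun h => @le_of_lt ℕ po.toPreorder _ _ h
  have part1 : ∀ a b m n : ℕ, po.le a b → ∀ l < min m n,
      Sig.le (idx (sigmaWord po m a) l) (idx (sigmaWord po n b) l) := by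
    intro a b m n hab l hl
    have hlm : l < m := lt_of_lt_of_le hl (min_le_left _ _)
    have hln : l < n := lt_of_lt_of_le hl (min_le_right _ _)
    rw [sigma_idx po m a l hlm, sigma_idx po n b l hln]
    by_cases h1 : po.lt a l
    · simp only [if_pos h1]
      by_cases h2 : po.lt b l <;> by_cases h3 : po.lt l b <;>
        simp_all [Sig.le, Sig.val]
    · simp only [if_neg h1]
      by_cases h1' : po.lt l a
      · have hlb : po.lt l b := lle h1' hab
        have hnb : ¬ po.lt b l := fun h => irr (ltt h hlb)
        simp [h1', hlb, hnb, Sig.le, Sig.val]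
      · simp only [if_neg h1']
        have hnb : ¬ po.lt b l := fun h => h1 (lel hab h)
        by_cases h3 : po.lt l b <;> simp [hnb, h3, Sig.le, Sig.val]
  refine ⟨part1 a b m n, ?_, ?_, ?_⟩
  · rintro ⟨i, hiu, hiv, hL, hR, -⟩
    rw [sigma_len] at hiu; rw [sigma_len] at hiv
    rw [sigma_idx po m a i hiu] at hL
    rw [sigma_idx po n b i hiv] at hR
    have h1 : po.lt a i := by
      by_contra h; by_cases h2 : po.lt i a <;> simp [h, h2] at hL
    have h2 : po.lt i b := by
      by_cases h0 : po.lt b i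
      · simp [h0] at hR
      · by_contra h; simp [h0, h] at hR
    exact lof (ltt h1 h2)
  · rintro ⟨l, hl, -, hlt⟩ hba
    have hlm : l < m := lt_of_lt_of_le hl (min_le_left _ _)
    have hln : l < n := lt_of_lt_of_le hl (min_le_right _ _)
    rw [sigma_idx po m a l hlm, sigma_idx po n b l hln] at hlt
    by_cases h1 : po.lt a l
    · have hbl : po.lt b l := lel hba h1
      have hnb : ¬ po.lt l b := fun h => irr (ltt hbl h)
      simp [h1, hbl, hnb, Sig.lt, Sig.val] at hlt
    · by_cases h2 : po.lt l a
      · by_cases h3 : po.lt b l <;> by_cases h4 : po.lt l b <;>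
          simp [h1, h2, h3, h4, Sig.lt, Sig.val] at hlt
      · have hnb : ¬ po.lt l b := fun h => h2 (lle h hba)
        by_cases h3 : po.lt b l <;> simp [h1, h2, h3, hnb, Sig.lt, Sig.val] at hlt
  · rintro rfl ⟨h1, h2⟩
    constructor
    · intro hab
      refine h1 ⟨by rw [sigma_len, sigma_len], ?_⟩
      intro i hi
      rw [sigma_len] at hi
      exact part1 a b m m hab i (by simp [hi])
    · intro hba
      refine h2 ⟨by rw [sigma_len, sigma_len], ?_⟩
      intro i hi
      rw [sigma_len] at hi
      exact part1 b a m m hba i (by simp [hi])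
end

section
/- Let ≤P be any partial order on ℕ and define φ as below; let T be the closure of φ[ℕ] under initial segments. Then: (1) φ is an embedding of (ℕ, ≤P) into (Σ*, ⪯), i.e., φ is injective and a ≤P b if and only if φ(a) ⪯ φ(b); (2) every φ(v) is a leaf of T, i.e., no word of T properly extends φ(v); (3) all words in T are pairwise compatible; (4) if v and w are ≤P-incomparable, then there exist indices i, j < min(|φ(v)|, |φ(w)|) with φ(v)_i <lex φ(w)_i and φ(w)_j <lex φ(v)_j. -/
/-- The embedding `φ` of a partial order `≤P` on `ℕ` into `(Σ*, ⪯)`: `φ(j)` has length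
`2j+2`, ends with `LR`, and `(φ(j)_{2i}, φ(j)_{2i+1})` is `(L,L)` if `j <P i`, `(R,R)` if
`i <P j` and `(X,X)` otherwise, for `i < j`. -/
noncomputable def phiWord (po : PartialOrder ℕ) (j : ℕ) : Word :=
  (List.range j).foldr
    (fun i acc =>
      (@ite Word (po.lt j i) (Classical.propDecidable _) [Sig.L, Sig.L]
        (@ite Word (po.lt i j) (Classical.propDecidable _) [Sig.R, Sig.R]
          [Sig.X, Sig.X])) ++ acc)
    [] ++ [Sig.L, Sig.R]

/-! Compare `φ(a)` and `φ(b)` pair by pair, the pair `i` being positions `2i, 2i+1`. If `a <P b`,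
transitivity makes `φ(a)` letterwise `≤` `φ(b)`, and the pair `min(a, b)` supplies an `(L, R)`, so
`φ(a) ≺ φ(b)`; conversely an `L` of `φ(a)` above an `R` of `φ(b)` in pair `i` forces
`a ≤P i ≤P b`. If `a` and `b` are incomparable, no position carries opposed letters, and the pair
`min(a, b)` is `LR` against `XX`. Both letterwise properties pass to prefixes and yield
compatibility. A prefix `φ(v)` of `φ(w)` would put `LR` at pair `v` of `φ(w)`, whence
`w ≤P v ≤P w`. -/

instance (a b : Sig) : Decidable (Sig.le a b) := inferInstanceAs (Decidable (a.val ≤ b.val))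

instance (a b : Sig) : Decidable (Sig.lt a b) := inferInstanceAs (Decidable (a.val < b.val))

namespace Sig

lemma le_refl (a : Sig) : a.le a := Nat.le_refl _

lemma L_le (a : Sig) : L.le a := Nat.zero_le _

lemma le_R (a : Sig) : a.le R := by cases a <;> decide

lemma not_lt_of_le {a b : Sig} (h : a.le b) : ¬ b.lt a := Nat.not_lt.mpr h

lemma lt_or_gt_of_ne {a b : Sig} (h : a ≠ b) : a.lt b ∨ b.lt a := by
  cases a <;> cases b <;> first | exact absurd rfl h | decide

def Opposed (a b : Sig) : Prop := (a = L ∧ b = R) ∨ (a = R ∧ b = L)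

lemma Opposed.symm {a b : Sig} (h : Opposed a b) : Opposed b a := (h.imp And.symm And.symm).symm

end Sig

def Letterwise (r : Sig → Sig → Prop) (u v : Word) : Prop :=
  ∀ k < min u.length v.length, r (idx u k) (idx v k)

lemma idx_eq_of_prefix {u w : Word} (h : u <+: w) {k : ℕ} (hk : k < u.length) :
    idx u k = idx w k := by
  obtain ⟨t, rfl⟩ := h
  exact (List.getD_append _ _ _ _ hk).symm

lemma Letterwise.of_prefix {r : Sig → Sig → Prop} {u v u' v' : Word} (h : Letterwise r u' v')
    (hu : u <+: u') (hv : v <+: v') : Letterwise r u v := by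
  intro k hk
  rw [lt_min_iff] at hk
  rw [idx_eq_of_prefix hu hk.1, idx_eq_of_prefix hv hk.2]
  exact h k (lt_min (hk.1.trans_le hu.length_le) (hk.2.trans_le hv.length_le))

lemma eq_of_length_eq_of_idx_eq {u v : Word} (hl : u.length = v.length)
    (h : ∀ k < u.length, idx u k = idx v k) : u = v := by
  refine List.ext_getElem hl fun k hu hv => ?_
  simpa only [idx, List.getD_eq_getElem _ _ hu, List.getD_eq_getElem _ _ hv] using h k hu

lemma lexLe_total (u v : Word) : lexLe u v ∨ lexLe v u := by
  classical
  by_cases h : ∃ k, k < u.length ∧ k < v.length ∧ idx u k ≠ idx v k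
  · obtain ⟨hu, hv, hne⟩ := Nat.find_spec h
    have hmin : ∀ j < Nat.find h, idx u j = idx v j := fun j hj =>
      not_not.mp fun hne => Nat.find_min h hj ⟨hj.trans hu, hj.trans hv, hne⟩
    rcases Sig.lt_or_gt_of_ne hne with hlt | hlt
    · exact Or.inl (Or.inl (Or.inl ⟨_, hu, hv, hlt, hmin⟩))
    · exact Or.inr (Or.inl (Or.inl ⟨_, hv, hu, hlt, fun j hj => (hmin j hj).symm⟩))
  · push Not at h
    rcases lt_trichotomy u.length v.length with hl | hl | hl
    · exact Or.inl (Or.inl (Or.inr ⟨hl, fun j hj => h j hj (hj.trans hl)⟩))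
    · exact Or.inl (Or.inr (eq_of_length_eq_of_idx_eq hl fun j hj => h j hj (hl ▸ hj)))
    · exact Or.inr (Or.inl (Or.inr ⟨hl, fun j hj => (h j (hj.trans hl) hj).symm⟩))

lemma compatible_comm {u v : Word} : compatible u v ↔ compatible v u := Or.comm

lemma compatPair_of_letterwise_le {u v : Word} (h : Letterwise Sig.le u v) : compatPair u v :=
  ⟨fun l hl hRL => absurd (h l hl) (by rw [hRL.1, hRL.2]; decide), fun _ => h⟩

lemma letterwise_eq_of_letterwise_le_of_lexLe {u v : Word} (h : Letterwise Sig.le u v)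
    (hvu : lexLe v u) : Letterwise Eq v u := by
  rcases hvu with (⟨i, hv, hu, hlt, -⟩ | ⟨-, heq⟩) | rfl
  · exact absurd hlt (Sig.not_lt_of_le (h i (lt_min hu hv)))
  · exact fun k hk => heq k (hk.trans_le (min_le_left _ _))
  · exact fun _ _ => rfl

lemma compatible_of_letterwise_le {u v : Word} (h : Letterwise Sig.le u v) : compatible u v := by
  rcases lexLe_total u v with huv | hvu
  · exact Or.inl ⟨huv, compatPair_of_letterwise_le h⟩
  · refine Or.inr ⟨hvu, compatPair_of_letterwise_le fun k hk => ?_⟩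
    rw [letterwise_eq_of_letterwise_le_of_lexLe h hvu k hk]
    exact Sig.le_refl _

lemma compatPair_of_letterwise_not_opposed {u v : Word}
    (h : Letterwise (fun a b => ¬ Sig.Opposed a b) u v) : compatPair u v :=
  ⟨fun l hl hRL => h l hl (Or.inr hRL), fun ⟨l, hl, hLR⟩ => absurd (Or.inl hLR) (h l hl)⟩

lemma compatible_of_letterwise_not_opposed {u v : Word}
    (h : Letterwise (fun a b => ¬ Sig.Opposed a b) u v) : compatible u v := by
  rcases lexLe_total u v with huv | hvu
  · exact Or.inl ⟨huv, compatPair_of_letterwise_not_opposed h⟩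
  · refine Or.inr ⟨hvu, compatPair_of_letterwise_not_opposed fun k hk hop => ?_⟩
    exact h k (min_comm u.length v.length ▸ hk) hop.symm

lemma prec_of_letterwise_le {u v : Word} (h : Letterwise Sig.le u v) {k : ℕ}
    (hk : k < min u.length v.length) (hu : idx u k = Sig.L) (hv : idx v k = Sig.R) :
    prec u v :=
  ⟨k, (lt_min_iff.mp hk).1, (lt_min_iff.mp hk).2, hu, hv, fun j hj => h j (hj.trans hk)⟩

lemma flatMap_range_pair (g : ℕ → Sig) (n : ℕ) :
    (List.range n).flatMap (fun i => [g i, g i]) = (List.range (2*n)).map (fun k => g (k/2)) := by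
  induction n with
  | zero => rfl
  | succ n ih =>
    rw [show 2*(n+1) = 2*n+1+1 by ring, List.range_succ, List.range_succ, List.range_succ]
    simp [ih, show (2*n+1)/2 = n by omega]

open Classical in
noncomputable def phiLetter (po : PartialOrder ℕ) (j i : ℕ) : Sig :=
  if po.lt j i then Sig.L else if po.lt i j then Sig.R else Sig.X

section phiWord

/- `po` is a local instance below and generic `PartialOrder ℕ` lemmas pick it up, but `<`, `≤` on
`ℕ` and generic `Preorder ℕ` lemmas still resolve to the usual order (`let _ := po.toPreorder`
overrides the latter). `omega` must not see hypotheses about `po.lt` or `po.le`: it reads them as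
the usual order on `ℕ`. -/
variable {po : PartialOrder ℕ}

lemma phiLetter_eq_L_iff {j i : ℕ} : phiLetter po j i = Sig.L ↔ po.lt j i := by
  unfold phiLetter
  split_ifs with h₁ h₂ <;> simp [h₁]

lemma phiLetter_eq_R_iff {j i : ℕ} : phiLetter po j i = Sig.R ↔ po.lt i j := by
  let _ := po.toPreorder
  unfold phiLetter
  split_ifs with h₁ h₂
  · simpa using h₁.asymm
  · simpa using h₂
  · simpa using h₂

lemma phiLetter_eq_X {j i : ℕ} (h₁ : ¬ po.lt j i) (h₂ : ¬ po.lt i j) : phiLetter po j i = Sig.X := by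
  simp [phiLetter, h₁, h₂]

lemma phiLetter_mono {a b : ℕ} (hab : po.lt a b) (i : ℕ) :
    (phiLetter po a i).le (phiLetter po b i) := by
  let _ := po.toPreorder
  by_cases hai : po.lt a i
  · rw [phiLetter_eq_L_iff.2 hai]; exact Sig.L_le _
  by_cases hia : po.lt i a
  · rw [phiLetter_eq_R_iff.2 (hia.trans hab)]; exact Sig.le_R _
  have hbi : phiLetter po b i ≠ Sig.L := fun h => hai (hab.trans (phiLetter_eq_L_iff.1 h))
  rw [phiLetter_eq_X hai hia]
  revert hbi
  cases phiLetter po b i <;> decide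

lemma not_opposed_phiLetter {a b : ℕ} (hab : ¬ po.lt a b) (hba : ¬ po.lt b a) (i : ℕ) :
    ¬ Sig.Opposed (phiLetter po a i) (phiLetter po b i) := by
  let _ := po.toPreorder
  rintro (⟨ha, hb⟩ | ⟨ha, hb⟩)
  · exact hab ((phiLetter_eq_L_iff.1 ha).trans (phiLetter_eq_R_iff.1 hb))
  · exact hba ((phiLetter_eq_L_iff.1 hb).trans (phiLetter_eq_R_iff.1 ha))

lemma phiWord_eq (j : ℕ) :
    phiWord po j = (List.range (2*j)).map (fun k => phiLetter po j (k/2)) ++ [Sig.L, Sig.R] := by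
  have hpair : ∀ i, (@ite Word (po.lt j i) (Classical.propDecidable _) [Sig.L, Sig.L]
      (@ite Word (po.lt i j) (Classical.propDecidable _) [Sig.R, Sig.R] [Sig.X, Sig.X])) =
      [phiLetter po j i, phiLetter po j i] := fun i => by
    unfold phiLetter; split_ifs <;> rfl
  have hfoldr : ∀ l : List ℕ, l.foldr (fun i acc => [phiLetter po j i, phiLetter po j i] ++ acc) [] =
      l.flatMap fun i => [phiLetter po j i, phiLetter po j i] := fun l => by
    induction l with
    | nil => rfl
    | cons i l ih => rw [List.foldr_cons, List.flatMap_cons, ih]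
  simp only [phiWord, hpair, hfoldr, List.append_left_inj]
  exact flatMap_range_pair _ j

lemma length_phiWord (j : ℕ) : (phiWord po j).length = 2*j+2 := by
  simp [phiWord_eq]

lemma idx_phiWord_of_lt_two_mul {j k : ℕ} (hk : k < 2*j) : idx (phiWord po j) k = phiLetter po j (k/2) := by
  rw [phiWord_eq, idx, List.getD_append _ _ _ _ (by simpa using hk)]
  simp [hk]

lemma idx_phiWord_two_mul (j : ℕ) : idx (phiWord po j) (2*j) = Sig.L := by
  simp [phiWord_eq, idx]

lemma idx_phiWord_two_mul_add_one (j : ℕ) : idx (phiWord po j) (2*j+1) = Sig.R := by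
  simp [phiWord_eq, idx]

lemma idx_phiWord_two_mul_of_lt {i j : ℕ} (h : i < j) :
    idx (phiWord po j) (2*i) = phiLetter po j i := by
  rw [idx_phiWord_of_lt_two_mul (by omega), Nat.mul_div_cancel_left i Nat.zero_lt_two]

lemma idx_phiWord_two_mul_add_one_of_lt {i j : ℕ} (h : i < j) :
    idx (phiWord po j) (2*i+1) = phiLetter po j i := by
  rw [idx_phiWord_of_lt_two_mul (by omega), show (2*i+1)/2 = i by omega]

lemma two_mul_add_one_lt_min_length_phiWord {a b : ℕ} (h : a ≤ b) :
    2*a+1 < min (phiWord po a).length (phiWord po b).length := by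
  simp only [length_phiWord]; omega

lemma le_of_idx_phiWord_eq_L {j k : ℕ} (hk : k < (phiWord po j).length)
    (h : idx (phiWord po j) k = Sig.L) : po.le j (k/2) := by
  rw [length_phiWord] at hk
  rcases lt_or_ge k (2*j) with hkj | hkj
  · rw [idx_phiWord_of_lt_two_mul hkj, phiLetter_eq_L_iff] at h
    exact ((po.lt_iff_le_not_ge _ _).1 h).1
  · obtain rfl | rfl : k = 2*j ∨ k = 2*j+1 := by omega
    · rw [Nat.mul_div_cancel_left j Nat.zero_lt_two]; exact po.le_refl j
    · rw [idx_phiWord_two_mul_add_one] at h; exact absurd h (by decide)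

lemma le_of_idx_phiWord_eq_R {j k : ℕ} (hk : k < (phiWord po j).length)
    (h : idx (phiWord po j) k = Sig.R) : po.le (k/2) j := by
  rw [length_phiWord] at hk
  rcases lt_or_ge k (2*j) with hkj | hkj
  · rw [idx_phiWord_of_lt_two_mul hkj, phiLetter_eq_R_iff] at h
    exact ((po.lt_iff_le_not_ge _ _).1 h).1
  · obtain rfl | rfl : k = 2*j ∨ k = 2*j+1 := by omega
    · rw [idx_phiWord_two_mul] at h; exact absurd h (by decide)
    · rw [show (2*j+1)/2 = j by omega]; exact po.le_refl j

lemma le_of_prec_phiWord {a b : ℕ} (h : prec (phiWord po a) (phiWord po b)) : po.le a b := by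
  obtain ⟨k, ha, hb, hL, hR, -⟩ := h
  exact po.le_trans _ _ _ (le_of_idx_phiWord_eq_L ha hL) (le_of_idx_phiWord_eq_R hb hR)

lemma eq_of_phiWord_prefix {v w : ℕ} (h : phiWord po v <+: phiWord po w) : v = w := by
  have hv : (2*v+1)/2 = v := by omega
  have hlen : 2*v+1 < (phiWord po v).length := by simp [length_phiWord]
  have hL : idx (phiWord po w) (2*v) = Sig.L := by
    rw [← idx_eq_of_prefix h (by omega), idx_phiWord_two_mul]
  have hR : idx (phiWord po w) (2*v+1) = Sig.R := by
    rw [← idx_eq_of_prefix h hlen, idx_phiWord_two_mul_add_one]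
  have hwv := le_of_idx_phiWord_eq_L ((Nat.lt_succ_self _).trans (hlen.trans_le h.length_le)) hL
  have hvw := le_of_idx_phiWord_eq_R (hlen.trans_le h.length_le) hR
  rw [Nat.mul_div_cancel_left v Nat.zero_lt_two] at hwv
  rw [hv] at hvw
  exact po.le_antisymm _ _ hvw hwv

lemma letterwise_phiWord {r : Sig → Sig → Prop} {a b : ℕ} (hab : a ≠ b)
    (hcommon : ∀ i, i < a → i < b → r (phiLetter po a i) (phiLetter po b i))
    (hlast_a : a < b → r Sig.L (phiLetter po b a) ∧ r Sig.R (phiLetter po b a))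
    (hlast_b : b < a → r (phiLetter po a b) Sig.L ∧ r (phiLetter po a b) Sig.R) :
    Letterwise r (phiWord po a) (phiWord po b) := by
  intro k hk
  simp only [length_phiWord, lt_min_iff] at hk
  by_cases hka : k < 2*a <;> by_cases hkb : k < 2*b
  · rw [idx_phiWord_of_lt_two_mul hka, idx_phiWord_of_lt_two_mul hkb]
    exact hcommon _ (by omega) (by omega)
  · obtain rfl | rfl : k = 2*b ∨ k = 2*b+1 := by omega
    · rw [idx_phiWord_two_mul_of_lt (j := a) (by omega), idx_phiWord_two_mul]
      exact (hlast_b (by omega)).1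
    · rw [idx_phiWord_two_mul_add_one_of_lt (j := a) (by omega), idx_phiWord_two_mul_add_one]
      exact (hlast_b (by omega)).2
  · obtain rfl | rfl : k = 2*a ∨ k = 2*a+1 := by omega
    · rw [idx_phiWord_two_mul, idx_phiWord_two_mul_of_lt (by omega)]
      exact (hlast_a (by omega)).1
    · rw [idx_phiWord_two_mul_add_one, idx_phiWord_two_mul_add_one_of_lt (by omega)]
      exact (hlast_a (by omega)).2
  · omega

lemma letterwise_le_phiWord_of_lt {a b : ℕ} (h : po.lt a b) :
    Letterwise Sig.le (phiWord po a) (phiWord po b) := by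
  let _ := po.toPreorder
  refine letterwise_phiWord (fun hab => (hab ▸ h).ne rfl) (fun i _ _ => phiLetter_mono h i)
    (fun _ => ?_) (fun _ => ?_)
  · rw [phiLetter_eq_R_iff.2 h]; exact ⟨Sig.L_le _, Sig.le_refl _⟩
  · rw [phiLetter_eq_L_iff.2 h]; exact ⟨Sig.le_refl _, Sig.L_le _⟩

lemma letterwise_not_opposed_phiWord {a b : ℕ} (hab : a ≠ b) (h₁ : ¬ po.lt a b)
    (h₂ : ¬ po.lt b a) :
    Letterwise (fun x y => ¬ Sig.Opposed x y) (phiWord po a) (phiWord po b) := by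
  refine letterwise_phiWord hab (fun i _ _ => not_opposed_phiLetter h₁ h₂ i)
    (fun _ => ?_) (fun _ => ?_)
  · rw [phiLetter_eq_X h₂ h₁]; simp [Sig.Opposed]
  · rw [phiLetter_eq_X h₁ h₂]; simp [Sig.Opposed]

lemma prec_phiWord_of_lt {a b : ℕ} (h : po.lt a b) : prec (phiWord po a) (phiWord po b) := by
  have hne : a ≠ b := by let _ := po.toPreorder; exact h.ne
  have hle := letterwise_le_phiWord_of_lt h
  rcases Nat.lt_or_gt_of_ne hne with hab | hba
  · refine prec_of_letterwise_le hle
      (Nat.lt_of_succ_lt (two_mul_add_one_lt_min_length_phiWord hab.le))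
      (idx_phiWord_two_mul a) ?_
    rw [idx_phiWord_two_mul_of_lt hab, phiLetter_eq_R_iff]
    exact h
  · refine prec_of_letterwise_le hle
      (min_comm (phiWord po a).length _ ▸ two_mul_add_one_lt_min_length_phiWord hba.le) ?_
      (idx_phiWord_two_mul_add_one b)
    rw [idx_phiWord_two_mul_add_one_of_lt hba, phiLetter_eq_L_iff]
    exact h

lemma phiWord_injective : Function.Injective (phiWord po) := fun a b h => by
  simpa [length_phiWord] using congrArg List.length h

lemma le_iff_preceq_phiWord {a b : ℕ} : po.le a b ↔ preceq (phiWord po a) (phiWord po b) := by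
  refine ⟨fun hab => ?_, ?_⟩
  · rcases eq_or_ne a b with rfl | hne
    · exact Or.inr rfl
    · exact Or.inl (prec_phiWord_of_lt (lt_of_le_of_ne hab hne))
  · rintro (h | h)
    · exact le_of_prec_phiWord h
    · obtain rfl := phiWord_injective h
      exact po.le_refl a

lemma compatible_of_prefix_phiWord {u v : Word} {a b : ℕ} (hu : u <+: phiWord po a)
    (hv : v <+: phiWord po b) : compatible u v := by
  rcases eq_or_ne a b with rfl | hab
  · exact compatible_of_letterwise_le <|
      Letterwise.of_prefix (fun _ _ => Sig.le_refl _) hu hv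
  by_cases h₁ : po.lt a b
  · exact compatible_of_letterwise_le ((letterwise_le_phiWord_of_lt h₁).of_prefix hu hv)
  by_cases h₂ : po.lt b a
  · exact compatible_comm.1
      (compatible_of_letterwise_le ((letterwise_le_phiWord_of_lt h₂).of_prefix hv hu))
  · exact compatible_of_letterwise_not_opposed
      ((letterwise_not_opposed_phiWord hab h₁ h₂).of_prefix hu hv)

lemma exists_lt_lt_phiWord_of_lt {v w : ℕ} (hvw : v < w) (hX : phiLetter po w v = Sig.X) :
    ∃ i < min (phiWord po v).length (phiWord po w).length,
      ∃ j < min (phiWord po v).length (phiWord po w).length,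
        Sig.lt (idx (phiWord po v) i) (idx (phiWord po w) i) ∧
        Sig.lt (idx (phiWord po w) j) (idx (phiWord po v) j) := by
  have hlt := two_mul_add_one_lt_min_length_phiWord (po := po) hvw.le
  refine ⟨2*v, Nat.lt_of_succ_lt hlt, 2*v+1, hlt, ?_, ?_⟩
  · rw [idx_phiWord_two_mul, idx_phiWord_two_mul_of_lt hvw, hX]; decide
  · rw [idx_phiWord_two_mul_add_one, idx_phiWord_two_mul_add_one_of_lt hvw, hX]; decide

lemma exists_lt_lt_phiWord_of_incomparable {v w : ℕ} (hvw : ¬ po.le v w) (hwv : ¬ po.le w v) :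
    ∃ i < min (phiWord po v).length (phiWord po w).length,
      ∃ j < min (phiWord po v).length (phiWord po w).length,
        Sig.lt (idx (phiWord po v) i) (idx (phiWord po w) i) ∧
        Sig.lt (idx (phiWord po w) j) (idx (phiWord po v) j) := by
  have h₁ : ¬ po.lt v w := fun h => hvw ((po.lt_iff_le_not_ge _ _).1 h).1
  have h₂ : ¬ po.lt w v := fun h => hwv ((po.lt_iff_le_not_ge _ _).1 h).1
  rcases Nat.lt_or_gt_of_ne (fun h => hvw (h ▸ po.le_refl v) : v ≠ w) with h | h
  · exact exists_lt_lt_phiWord_of_lt h (phiLetter_eq_X h₂ h₁)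
  · obtain ⟨i, hi, j, hj, hlt₁, hlt₂⟩ := exists_lt_lt_phiWord_of_lt h (phiLetter_eq_X h₁ h₂)
    rw [min_comm] at hi hj
    exact ⟨j, hj, i, hi, hlt₂, hlt₁⟩

end phiWord

/-- `φ` is an embedding of `(ℕ, ≤P)` into `(Σ*, ⪯)`, its values are leaves of
`T = closure of φ[ℕ]`, all words of `T` are pairwise compatible, and incomparable vertices
are mapped to `⊥`-witnessed words. -/
theorem phiWord_embedding (po : PartialOrder ℕ) :
    -- (1)
    (Function.Injective (phiWord po) ∧
      ∀ a b : ℕ, po.le a b ↔ preceq (phiWord po a) (phiWord po b)) ∧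
    -- (2)
    (∀ v : ℕ, ∀ u ∈ segClosure (Set.range (phiWord po)),
      phiWord po v <+: u → u = phiWord po v) ∧
    -- (3)
    (∀ u ∈ segClosure (Set.range (phiWord po)),
      ∀ v ∈ segClosure (Set.range (phiWord po)), compatible u v) ∧
    -- (4)
    (∀ v w : ℕ, ¬ po.le v w → ¬ po.le w v →
      ∃ i < min (phiWord po v).length (phiWord po w).length,
        ∃ j < min (phiWord po v).length (phiWord po w).length,
          Sig.lt (idx (phiWord po v) i) (idx (phiWord po w) i) ∧
          Sig.lt (idx (phiWord po w) j) (idx (phiWord po v) j)) := by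
  refine ⟨⟨phiWord_injective, fun _ _ => le_iff_preceq_phiWord⟩,
    ?_, ?_, fun _ _ => exists_lt_lt_phiWord_of_incomparable⟩
  · rintro v u ⟨_, ⟨w, rfl⟩, huw⟩ hvu
    obtain rfl := eq_of_phiWord_prefix (hvu.trans huw)
    exact huw.eq_of_length (Nat.le_antisymm huw.length_le hvu.length_le)
  · rintro u ⟨_, ⟨a, rfl⟩, hu⟩ v ⟨_, ⟨b, rfl⟩, hv⟩
    exact compatible_of_prefix_phiWord hu hv
end

section
/- If S ⊆ Σ* and ℓ < ℓ' are levels such that no word of S has length ℓ or ℓ' and every u ∈ S with |u| > ℓ' satisfies u_ℓ = u_{ℓ'}, then the level ℓ' is not an interesting level of S. -/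
/-!
Appending to each word `w` of length `l'` its own letter `w_l` maps `S̄_{l'}` onto `S̄_{l'+1}`:
every word of `S` passing level `l'` repeats the letter of level `l` there, and none stops at
`l'`. Every relation in play (`⪯`, `⊴`, `≤lex`, compatibility) compares two words letter by
letter, with a condition on the letters before the first witness; a witness at the new last
position can be moved back to position `l`, so the map preserves and reflects all of them.
-/

def dup (l : ℕ) (w : Word) : Word := w ++ [idx w l]

@[simp]
lemma length_dup (l : ℕ) (w : Word) : (dup l w).length = w.length + 1 := by
  simp [dup]

lemma idx_dup_of_lt (l : ℕ) {w : Word} {i : ℕ} (hi : i < w.length) :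
    idx (dup l w) i = idx w i :=
  List.getD_append _ _ _ _ hi

lemma idx_dup_length (l : ℕ) (w : Word) : idx (dup l w) w.length = idx w l := by
  simp [dup, idx]

lemma dup_injective (l : ℕ) : Function.Injective (dup l) :=
  fun _ _ h => List.append_inj_left' h rfl

lemma take_dup (l : ℕ) (w : Word) : (dup l w).take w.length = w :=
  List.take_left

lemma dup_take_of_idx_eq {u : Word} {l n : ℕ} (hl : l < n) (hn : n < u.length)
    (h : idx u l = idx u n) : dup l (u.take n) = u.take (n + 1) := by
  have hidx : idx (u.take n) l = idx u n := by
    rw [← h]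
    simp [idx, List.getD_eq_getElem?_getD, hl]
  rw [dup, hidx, List.take_add_one, List.getElem?_eq_getElem hn]
  simp [idx, List.getD_eq_getElem?_getD, List.getElem?_eq_getElem hn]

section

variable {u v : Word} {l n : ℕ}

lemma forall_lt_dup_iff (P : Sig → Sig → Prop) (hu : u.length = n) (hv : v.length = n)
    (hl : l < n) :
    (∀ i < n + 1, P (idx (dup l u) i) (idx (dup l v) i)) ↔
      ∀ i < n, P (idx u i) (idx v i) := by
  have hlt : ∀ i < n, idx (dup l u) i = idx u i ∧ idx (dup l v) i = idx v i :=
    fun i hi => ⟨idx_dup_of_lt l (hu ▸ hi), idx_dup_of_lt l (hv ▸ hi)⟩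
  refine ⟨fun h i hi => ?_, fun h i hi => ?_⟩
  · simpa only [hlt i hi] using h i (by omega)
  · rcases Nat.lt_succ_iff_lt_or_eq.mp hi with hi | rfl
    · simpa only [hlt i hi] using h i hi
    · rw [← hu, idx_dup_length, hu, ← hv, idx_dup_length]
      exact h l hl

lemma exists_lt_dup_iff (P Q : Sig → Sig → Prop) (hu : u.length = n) (hv : v.length = n)
    (hl : l < n) :
    (∃ i < n + 1, P (idx (dup l u) i) (idx (dup l v) i) ∧
        ∀ j < i, Q (idx (dup l u) j) (idx (dup l v) j)) ↔
      ∃ i < n, P (idx u i) (idx v i) ∧ ∀ j < i, Q (idx u j) (idx v j) := by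
  have hlt : ∀ i < n, idx (dup l u) i = idx u i ∧ idx (dup l v) i = idx v i :=
    fun i hi => ⟨idx_dup_of_lt l (hu ▸ hi), idx_dup_of_lt l (hv ▸ hi)⟩
  constructor
  · rintro ⟨i, hi, hP, hQ⟩
    have hQ' : ∀ j < min i n, Q (idx u j) (idx v j) := fun j hj => by
      simpa only [hlt j (by omega)] using hQ j (by omega)
    rcases Nat.lt_succ_iff_lt_or_eq.mp hi with hi | rfl
    · exact ⟨i, hi, by simpa only [hlt i hi] using hP, fun j hj => hQ' j (by omega)⟩
    · rw [← hu, idx_dup_length, hu, ← hv, idx_dup_length] at hP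
      exact ⟨l, hl, hP, fun j hj => hQ' j (by omega)⟩
  · rintro ⟨i, hi, hP, hQ⟩
    exact ⟨i, by omega, by simpa only [hlt i hi] using hP,
      fun j hj => by simpa only [hlt j (by omega)] using hQ j hj⟩

lemma trleq_dup_iff (hu : u.length = n) (hv : v.length = n) (hl : l < n) :
    trleq (dup l u) (dup l v) ↔ trleq u v := by
  simpa only [trleq, length_dup, hu, hv, true_and] using forall_lt_dup_iff Sig.le hu hv hl

lemma prec_dup_iff (hu : u.length = n) (hv : v.length = n) (hl : l < n) :
    prec (dup l u) (dup l v) ↔ prec u v := by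
  simpa only [prec, length_dup, hu, hv, and_self_left, and_assoc] using
    exists_lt_dup_iff (fun a b => a = Sig.L ∧ b = Sig.R) Sig.le hu hv hl

lemma lexLt_dup_iff (hu : u.length = n) (hv : v.length = n) (hl : l < n) :
    lexLt (dup l u) (dup l v) ↔ lexLt u v := by
  simpa only [lexLt, length_dup, hu, hv, lt_self_iff_false, false_and, or_false,
    and_self_left] using exists_lt_dup_iff Sig.lt Eq hu hv hl

lemma lexLe_dup_iff (hu : u.length = n) (hv : v.length = n) (hl : l < n) :
    lexLe (dup l u) (dup l v) ↔ lexLe u v := by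
  rw [lexLe, lexLe, lexLt_dup_iff hu hv hl, (dup_injective l).eq_iff]

lemma preceq_dup_iff (hu : u.length = n) (hv : v.length = n) (hl : l < n) :
    preceq (dup l u) (dup l v) ↔ preceq u v := by
  rw [preceq, preceq, prec_dup_iff hu hv hl, (dup_injective l).eq_iff]

lemma compatPair_dup_iff (hu : u.length = n) (hv : v.length = n) (hl : l < n) :
    compatPair (dup l u) (dup l v) ↔ compatPair u v := by
  have hLR := exists_lt_dup_iff (fun a b => a = Sig.L ∧ b = Sig.R) (fun _ _ => True) hu hv hl
  simp only [implies_true, and_true] at hLR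
  simp only [compatPair, length_dup, hu, hv, min_self]
  exact and_congr
    (forall_lt_dup_iff (fun a b => ¬(a = Sig.R ∧ b = Sig.L)) hu hv hl)
    (imp_congr hLR (forall_lt_dup_iff Sig.le hu hv hl))

lemma compatible_dup_iff (hu : u.length = n) (hv : v.length = n) (hl : l < n) :
    compatible (dup l u) (dup l v) ↔ compatible u v := by
  rw [compatible, compatible, lexLe_dup_iff hu hv hl, lexLe_dup_iff hv hu hl,
    compatPair_dup_iff hu hv hl, compatPair_dup_iff hv hu hl]

end

lemma levelIso_image_dup {A : Set Word} {l n : ℕ} (hA : ∀ w ∈ A, w.length = n) (hl : l < n) :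
    LevelIso A (dup l '' A) :=
  ⟨dup l, (dup_injective l).injOn.bijOn_image, fun u hu v hv =>
    ⟨(preceq_dup_iff (hA u hu) (hA v hv) hl).symm, (trleq_dup_iff (hA u hu) (hA v hv) hl).symm,
      (lexLe_dup_iff (hA u hu) (hA v hv) hl).symm⟩⟩

lemma mem_cLevel_iff {S : Set Word} {m : ℕ} {w : Word} :
    w ∈ cLevel S m ↔ ∃ u ∈ S, m ≤ u.length ∧ u.take m = w := by
  constructor
  · rintro ⟨⟨u, hu, hpre⟩, rfl⟩
    exact ⟨u, hu, hpre.length_le, (List.prefix_iff_eq_take.mp hpre).symm⟩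
  · rintro ⟨u, hu, hm, rfl⟩
    exact ⟨⟨u, hu, List.take_prefix _ _⟩, List.length_take_of_le hm⟩

lemma cLevel_succ_eq_image_dup {S : Set Word} {l l' : ℕ} (hll : l < l')
    (hnol' : ∀ u ∈ S, u.length ≠ l')
    (hdup : ∀ u ∈ S, l' < u.length → idx u l = idx u l') :
    cLevel S (l' + 1) = dup l '' cLevel S l' := by
  ext w
  simp only [Set.mem_image, mem_cLevel_iff]
  constructor
  · rintro ⟨u, hu, hlen, rfl⟩
    exact ⟨u.take l', ⟨u, hu, by omega, rfl⟩, dup_take_of_idx_eq hll hlen (hdup u hu hlen)⟩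
  · rintro ⟨_, ⟨u, hu, hlen, rfl⟩, rfl⟩
    have hlen' : l' < u.length := hlen.lt_of_ne (hnol' u hu).symm
    exact ⟨u, hu, hlen', (dup_take_of_idx_eq hll hlen' (hdup u hu hlen')).symm⟩

theorem duplicate_level_not_interesting_general (S : Set Word) (l l' : ℕ) (hll : l < l')
    (hnol' : ∀ u ∈ S, u.length ≠ l')
    (hdup : ∀ u ∈ S, l' < u.length → idx u l = idx u l') :
    ¬ Interesting S l' := by
  have hsucc := cLevel_succ_eq_image_dup hll hnol' hdup
  rintro (hiso | ⟨_, hu, _, hv, hnc, hc⟩ | ⟨u, hu, hlen⟩)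
  · exact hiso (hsucc ▸ levelIso_image_dup (fun w hw => hw.2) hll)
  · rw [hsucc] at hu hv
    obtain ⟨u, ⟨-, hu⟩, rfl⟩ := hu
    obtain ⟨v, ⟨-, hv⟩, rfl⟩ := hv
    rw [← hu, take_dup, hu, ← hv, take_dup] at hc
    exact hnc ((compatible_dup_iff hu hv hll).mpr hc)
  · exact hnol' u hu hlen

/-- duplicate levels are not interesting. -/
theorem duplicate_level_not_interesting (S : Set Word) (l l' : ℕ) (hll : l < l')
    (hnol : ∀ u ∈ S, u.length ≠ l) (hnol' : ∀ u ∈ S, u.length ≠ l')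
    (hdup : ∀ u ∈ S, l' < u.length → idx u l = idx u l') :
    ¬ Interesting S l' :=
  duplicate_level_not_interesting_general S l l' hll hnol' hdup
end
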